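/- Let Z be totally separated, {z} clopen in Z, and Y have absorbing 0 and unit 1. If J is a prime multiplicative ideal of C(Z,Y) with J ⊆ I(z), then J = I(z). Hence when {z} is open, I(z) is a minimal prime ideal. -/

import Mathlib

/-- Pointwise multiplication of continuous maps into a topological magma. -/
def pmul {Z Y : Type*} [TopologicalSpace Z] [TopologicalSpace Y] [Mul Y]
    (hc : Continuous fun p : Y × Y => p.1 * p.2) (f g : C(Z, Y)) : C(Z, Y) :=
  ⟨fun z => f z * g z, hc.comp (f.continuous.prodMk g.continuous)⟩

/-!
Multiplying by the characteristic function `χ_U` of a clopen set `U` (equal to `0` on `U` and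
to `1` off `U`) fixes every map vanishing on `U`, so `χ_U ∈ J` puts all of `I(U)` into an ideal
`J`. Primality gives `χ_U ∈ J`, because `χ_U · χ_{Uᶜ} = 0 ∈ J` while `χ_{Uᶜ}` does not vanish
at `z`, hence lies outside `J ⊆ I(z)`.
-/

section pmul

variable {Z Y : Type*} [TopologicalSpace Z] [TopologicalSpace Y] [Mul Y]
  {hc : Continuous fun p : Y × Y => p.1 * p.2} {y0 y1 : Y} {U : Set Z} {J : Set C(Z, Y)}

@[simp]
theorem pmul_apply (f g : C(Z, Y)) (w : Z) : pmul hc f g w = f w * g w := rfl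

theorem pmul_eq_const_of_eqOn_compl (habs : ∀ y : Y, y0 * y = y0 ∧ y * y0 = y0)
    {χ χ' : C(Z, Y)} (hχ : ∀ w ∈ U, χ w = y0) (hχ' : ∀ w ∉ U, χ' w = y0) :
    pmul hc χ χ' = ContinuousMap.const Z y0 := by
  ext w
  by_cases hw : w ∈ U
  · simp [hχ w hw, (habs _).1]
  · simp [hχ' w hw, (habs _).2]

theorem pmul_eq_self_of_eqOn (habs : ∀ y : Y, y0 * y = y0 ∧ y * y0 = y0)
    (hunit : ∀ y : Y, y * y1 = y) {f χ : C(Z, Y)} (hχ0 : ∀ w ∈ U, χ w = y0)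
    (hχ1 : ∀ w ∉ U, χ w = y1) (hf : ∀ w ∈ U, f w = y0) :
    pmul hc f χ = f := by
  ext w
  by_cases hw : w ∈ U
  · simp [hχ0 w hw, (habs _).2, hf w hw]
  · simp [hχ1 w hw, hunit]

theorem mem_of_pmul_eq_const_of_notMem (habs : ∀ y : Y, y0 * y = y0 ∧ y * y0 = y0)
    (hJTheta : ContinuousMap.const Z y0 ∈ J)
    (hJprime : ∀ f g : C(Z, Y), pmul hc f g ∈ J → f ∈ J ∨ g ∈ J)
    {χ χ' : C(Z, Y)} (hχ : ∀ w ∈ U, χ w = y0) (hχ' : ∀ w ∉ U, χ' w = y0) (hχ'J : χ' ∉ J) :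
    χ ∈ J :=
  (hJprime χ χ' (pmul_eq_const_of_eqOn_compl habs hχ hχ' ▸ hJTheta)).resolve_right hχ'J

theorem mem_of_eqOn_of_char_mem (habs : ∀ y : Y, y0 * y = y0 ∧ y * y0 = y0)
    (hunit : ∀ y : Y, y * y1 = y) (hJideal : ∀ f g : C(Z, Y), g ∈ J → pmul hc f g ∈ J)
    {f χ : C(Z, Y)} (hχ0 : ∀ w ∈ U, χ w = y0) (hχ1 : ∀ w ∉ U, χ w = y1) (hχJ : χ ∈ J)
    (hf : ∀ w ∈ U, f w = y0) : f ∈ J :=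
  pmul_eq_self_of_eqOn habs hunit hχ0 hχ1 hf ▸ hJideal f χ hχJ

end pmul

theorem stmt17_general {Z Y : Type*} [TopologicalSpace Z] [TopologicalSpace Y]
    [Mul Y]
    (hc : Continuous fun p : Y × Y => p.1 * p.2)
    (y0 y1 : Y) (habs : ∀ y : Y, y0 * y = y0 ∧ y * y0 = y0)
    (hunit : ∀ y : Y, y * y1 = y) (h10 : y1 ≠ y0)
    (hchar : ∀ U : Set Z, IsClopen U →
      ∃ χ : C(Z, Y), (∀ w ∈ U, χ w = y0) ∧ (∀ w ∉ U, χ w = y1))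
    (z : Z) (hz : IsClopen ({z} : Set Z))
    (J : Set C(Z, Y))
    (hJTheta : ContinuousMap.const Z y0 ∈ J)
    (hJideal : ∀ f g : C(Z, Y), g ∈ J → pmul hc f g ∈ J)
    (hJprime : ∀ f g : C(Z, Y), pmul hc f g ∈ J → f ∈ J ∨ g ∈ J)
    (hsub : J ⊆ {f : C(Z, Y) | f z = y0}) :
    J = {f : C(Z, Y) | f z = y0} := by
  refine hsub.antisymm fun f hf => ?_
  obtain ⟨χ, hχ0, hχ1⟩ := hchar {z} hz
  obtain ⟨χ', hχ'0, hχ'1⟩ := hchar {z}ᶜ hz.compl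
  have hχ'J : χ' ∉ J := fun h => h10 ((hχ'1 z (by simp)).symm.trans (hsub h))
  have hχJ : χ ∈ J := mem_of_pmul_eq_const_of_notMem habs hJTheta hJprime hχ0 hχ'0 hχ'J
  exact mem_of_eqOn_of_char_mem habs hunit hJideal hχ0 hχ1 hχJ (by simpa using hf)

theorem stmt17 {Z Y : Type*} [TopologicalSpace Z] [TopologicalSpace Y]
    [TotallySeparatedSpace Z] [Mul Y]
    (hc : Continuous fun p : Y × Y => p.1 * p.2)
    (y0 y1 : Y) (habs : ∀ y : Y, y0 * y = y0 ∧ y * y0 = y0)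
    (hunit : ∀ y : Y, y * y1 = y) (h10 : y1 ≠ y0)
    (hchar : ∀ U : Set Z, IsClopen U →
      ∃ χ : C(Z, Y), (∀ w ∈ U, χ w = y0) ∧ (∀ w ∉ U, χ w = y1))
    (z : Z) (hz : IsClopen ({z} : Set Z))
    (J : Set C(Z, Y))
    (hJTheta : ContinuousMap.const Z y0 ∈ J)
    (hJideal : ∀ f g : C(Z, Y), g ∈ J → pmul hc f g ∈ J)
    (hJprime : ∀ f g : C(Z, Y), pmul hc f g ∈ J → f ∈ J ∨ g ∈ J)
    (hsub : J ⊆ {f : C(Z, Y) | f z = y0}) :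
    J = {f : C(Z, Y) | f z = y0} :=
  stmt17_general hc y0 y1 habs hunit h10 hchar z hz J hJTheta hJideal hJprime hsub
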